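/- Let A be a finite set with |A| = N + 1 partitioned as A = {f} ∪ {f₁,…,f_n} ∪ {g₁,…,g_n} (so N = 2n), and let v : Set A → {0,1} with v(∅)=0 be such that for E ⊆ A \ {f}: v(E ∪ {f}) ≠ v(E) holds exactly when E = {f₁,…,f_n} (i.e., E contains all f_i and no g_j). Then |Shapley(A, v, f)| = n! · n! / (2n + 1)!, and hence 0 < |Shapley(A, v, f)| ≤ 2^{-n}. -/
import Mathlib


open scoped Classical

noncomputable def shapley {α : Type*} [Fintype α] [DecidableEq α] (v : Finset α → ℝ) (a : α) :
    ℝ :=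
  ∑ S ∈ (Finset.univ.erase a).powerset,
    ((S.card.factorial * (Fintype.card α - S.card - 1).factorial : ℝ) /
      (Fintype.card α).factorial) * (v (insert a S) - v S)

lemma two_pow_fact_le (n : ℕ) : 2 ^ n * (n.factorial * n.factorial) ≤ (2 * n + 1).factorial := by
  induction n with
  | zero => simp
  | succ k ih =>
    have h1 : 2 * (k + 1) + 1 = (2 * k + 1) + 2 := by ring
    rw [h1]
    have h2 : ((2 * k + 1) + 2).factorial =
        (2 * k + 3) * ((2 * k + 2) * (2 * k + 1).factorial) := by
      show ((2 * k + 2) + 1).factorial = _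
      rw [Nat.factorial_succ, show (2 * k + 2) = (2 * k + 1) + 1 from rfl,
        Nat.factorial_succ]
    rw [h2]
    have h3 : 2 ^ (k + 1) * ((k + 1).factorial * (k + 1).factorial)
        = (2 * ((k + 1) * (k + 1))) * (2 ^ k * (k.factorial * k.factorial)) := by
      simp [Nat.factorial_succ, pow_succ]
      ring
    rw [h3]
    calc (2 * ((k + 1) * (k + 1))) * (2 ^ k * (k.factorial * k.factorial))
        ≤ (2 * ((k + 1) * (k + 1))) * (2 * k + 1).factorial := by
          exact Nat.mul_le_mul_left _ ih
      _ ≤ ((2 * k + 3) * (2 * k + 2)) * (2 * k + 1).factorial := by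
          apply Nat.mul_le_mul_right
          nlinarith
      _ = (2 * k + 3) * ((2 * k + 2) * (2 * k + 1).factorial) := by ring

theorem gap_property_fails {α : Type*} [Fintype α] [DecidableEq α]
    (v : Finset α → ℝ) (h01 : ∀ S : Finset α, v S = 0 ∨ v S = 1) (hv : v ∅ = 0)
    (n : ℕ) (f : α) (P : Finset α) (hfP : f ∉ P) (hP : P.card = n)
    (hcard : Fintype.card α = 2 * n + 1)
    (hE : ∀ E ⊆ Finset.univ.erase f, (v (insert f E) ≠ v E ↔ E = P)) :
    |shapley v f| = (n.factorial * n.factorial : ℝ) / (2 * n + 1).factorial ∧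
      0 < |shapley v f| ∧ |shapley v f| ≤ (2 : ℝ) ^ (-(n : ℤ)) := by
  have hPsub : P ⊆ Finset.univ.erase f := by
    intro x hx
    exact Finset.mem_erase.2 ⟨fun h => hfP (h ▸ hx), Finset.mem_univ x⟩
  have hsub : 2 * n + 1 - n - 1 = n := by omega
  have hsum : shapley v f =
      ((n.factorial * n.factorial : ℝ) / (2 * n + 1).factorial) *
        (v (insert f P) - v P) := by
    unfold shapley
    rw [Finset.sum_eq_single P]
    · rw [hcard, hP, hsub]
    · intro S hS hSne
      have hv' : v (insert f S) = v S := by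
        by_contra hne
        exact hSne ((hE S (Finset.mem_powerset.1 hS)).1 hne)
      rw [hv']
      ring
    · intro h
      exact absurd (Finset.mem_powerset.2 hPsub) h
  have hne : v (insert f P) ≠ v P := (hE P hPsub).2 rfl
  have hdiff : |v (insert f P) - v P| = 1 := by
    rcases h01 (insert f P) with h1 | h1 <;> rcases h01 P with h2 | h2 <;>
      rw [h1, h2] at hne ⊢ <;> simp_all
  have hcpos : (0 : ℝ) < (n.factorial * n.factorial : ℝ) / (2 * n + 1).factorial := by
    positivity
  have habs : |shapley v f| = (n.factorial * n.factorial : ℝ) / (2 * n + 1).factorial := by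
    rw [hsum, abs_mul, hdiff, mul_one, abs_of_pos hcpos]
  refine ⟨habs, habs ▸ hcpos, ?_⟩
  rw [habs]
  have key := two_pow_fact_le n
  have key' : (2 : ℝ) ^ n * ((n.factorial : ℝ) * n.factorial) ≤ ((2 * n + 1).factorial : ℝ) := by
    calc (2 : ℝ) ^ n * ((n.factorial : ℝ) * n.factorial)
        = ((2 ^ n * (n.factorial * n.factorial) : ℕ) : ℝ) := by push_cast; ring
      _ ≤ ((2 * n + 1).factorial : ℝ) := by exact_mod_cast key
  rw [zpow_neg, zpow_natCast]
  rw [div_le_iff₀ (by positivity : (0:ℝ) < ((2 * n + 1).factorial : ℝ))]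
  rw [inv_mul_eq_div, le_div_iff₀ (by positivity : (0:ℝ) < (2:ℝ) ^ n)]
  nlinarith [key']
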